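/- arXiv:1001.4441 — 5 statements merged into one kernel-verified Lean document; each statement's English description precedes it below -/
import Mathlib

section
/- Let V be a real inner product space and 𝔥 ⊆ 𝔰𝔬(V) a Lie subalgebra. A linear map R : Λ²V → 𝔥 satisfies the first Bianchi identity R(u,v)w + R(v,w)u + R(w,u)v = 0 for all u,v,w ∈ V if and only if for each fixed x ∈ V the map P = R(·,x) : V → 𝔥 satisfies ⟨P(u)v, w⟩ + ⟨P(v)w, u⟩ + ⟨P(w)u, v⟩ = 0 for all u,v,w ∈ V. -/
open scoped RealInnerProductSpace

attribute [local instance] LieRing.ofAssociativeRing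

/-!
Pair `R` with the inner product into the 4-form `T a b c d = ⟪R a b c, d⟫`. It is antisymmetric in
`(a, b)` because `R` is alternating and in `(c, d)` because `R` takes skew values. The Bianchi
identity is the cyclic identity of `T` in its first three slots, the condition on each `R(·, x)`
is (up to the sign from swapping the first pair) the cyclic identity in its last three slots, and
for such a `T` either cyclic identity implies the pair symmetry `T a b c d = T c d a b`, which
exchanges them.
-/

section CyclicIdentities

variable {α : Type*}

theorem pair_symm_of_cyclic_first {T : α → α → α → α → ℝ}
    (h12 : ∀ a b c d, T b a c d = -T a b c d) (h34 : ∀ a b c d, T a b d c = -T a b c d)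
    (hcyc : ∀ a b c d, T a b c d + T b c a d + T c a b d = 0) (a b c d : α) :
    T a b c d = T c d a b := by
  linarith [hcyc a d b c, hcyc d b c a, hcyc b c a d, hcyc c a d b,
    h12 a b d c, h12 c d a b, h34 a b c d, h34 a d b c, h34 d b a c, h34 b c a d, h34 c d a b,
    h34 c a b d]

theorem cyclic_last_of_cyclic_first {T : α → α → α → α → ℝ}
    (h12 : ∀ a b c d, T b a c d = -T a b c d) (h34 : ∀ a b c d, T a b d c = -T a b c d)
    (hcyc : ∀ a b c d, T a b c d + T b c a d + T c a b d = 0) (a b c d : α) :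
    T a b c d + T a c d b + T a d b c = 0 := by
  have hsymm := pair_symm_of_cyclic_first h12 h34 hcyc
  linarith [hsymm a b c d, hsymm a c d b, hsymm a d b c, hcyc c d b a,
    h34 c d a b, h34 d b a c, h34 b c a d]

theorem cyclic_first_iff_cyclic_last {T : α → α → α → α → ℝ}
    (h12 : ∀ a b c d, T b a c d = -T a b c d) (h34 : ∀ a b c d, T a b d c = -T a b c d) :
    (∀ a b c d, T a b c d + T b c a d + T c a b d = 0) ↔
      ∀ a b c d, T a b c d + T a c d b + T a d b c = 0 := by
  refine ⟨cyclic_last_of_cyclic_first h12 h34, fun hcyc a b c d => ?_⟩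
  -- `(a, b, c, d) ↦ T c d a b` has the same antisymmetries and the two cyclic identities swapped
  have hswap := cyclic_last_of_cyclic_first (T := fun a b c d => T c d a b)
    (fun a b c d => h34 c d a b) (fun a b c d => h12 c d a b)
    (fun a b c d => by linarith [hcyc d a b c, h12 d c a b, h12 d a b c, h12 d b c a]) d a b c
  linarith [h34 a b c d, h34 b c a d, h34 c a b d]

end CyclicIdentities

theorem bianchi_iff_cyclic_general
    {V : Type*} [NormedAddCommGroup V] [InnerProductSpace ℝ V]
    (𝔥 : LieSubalgebra ℝ (Module.End ℝ V))
    (hskew : ∀ A ∈ 𝔥, ∀ u v : V, ⟪A u, v⟫ = -⟪u, A v⟫)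
    (R : V →ₗ[ℝ] V →ₗ[ℝ] Module.End ℝ V)
    (halt : ∀ u : V, R u u = 0)
    (hval : ∀ u v : V, R u v ∈ 𝔥) :
    (∀ u v w : V, R u v w + R v w u + R w u v = 0) ↔
      (∀ x u v w : V,
        ⟪R u x v, w⟫ + ⟪R v x w, u⟫ + ⟪R w x u, v⟫ = 0) := by
  let T : V → V → V → V → ℝ := fun a b c d => ⟪R a b c, d⟫
  have h12 : ∀ a b c d, T b a c d = -T a b c d := fun a b c d => by
    simp only [T, ← LinearMap.IsAlt.neg halt a b, LinearMap.neg_apply, inner_neg_left]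
  have h34 : ∀ a b c d, T a b d c = -T a b c d := fun a b c d => by
    simp only [T]
    rw [hskew _ (hval a b), real_inner_comm]
  have bianchi_iff : (∀ u v w : V, R u v w + R v w u + R w u v = 0) ↔
      ∀ u v w z, T u v w z + T v w u z + T w u v z = 0 := by
    simp only [T, ← inner_add_left]
    exact forall₃_congr fun u v w => ⟨fun h z => by rw [h, inner_zero_left],
      fun h => ext_inner_right ℝ fun z => by rw [h z, inner_zero_left]⟩
  rw [bianchi_iff, cyclic_first_iff_cyclic_last h12 h34]
  refine forall₄_congr fun x u v w => ?_
  change _ ↔ T u x v w + T v x w u + T w x u v = 0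
  rw [h12 u x v w, h12 v x w u, h12 w x u v]
  constructor <;> intro h <;> linarith

/-- For `R : Λ²V → 𝔥` (alternating, 𝔥-valued), the first Bianchi identity
holds iff for every `x` the map `P = R(·,x)` satisfies the cyclic identity of `𝒫(𝔥)`. -/
theorem bianchi_iff_cyclic
    {V : Type*} [NormedAddCommGroup V] [InnerProductSpace ℝ V] [FiniteDimensional ℝ V]
    (𝔥 : LieSubalgebra ℝ (Module.End ℝ V))
    (hskew : ∀ A ∈ 𝔥, ∀ u v : V, ⟪A u, v⟫ = -⟪u, A v⟫)
    (R : V →ₗ[ℝ] V →ₗ[ℝ] Module.End ℝ V)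
    (halt : ∀ u : V, R u u = 0)
    (hval : ∀ u v : V, R u v ∈ 𝔥) :
    (∀ u v w : V, R u v w + R v w u + R w u v = 0) ↔
      (∀ x u v w : V,
        ⟪R u x v, w⟫ + ⟪R v x w, u⟫ + ⟪R w x u, v⟫ = 0) :=
  bianchi_iff_cyclic_general 𝔥 hskew R halt hval
end

section
/- Let 𝔥 be a finite-dimensional complex semisimple Lie algebra with Killing form B, and let P : 𝔥 → 𝔥 satisfy both P([x,y]) = −[P(x), y] − [x, P(y)] for all x,y and the cyclic identity B([P(x),y],z) + B([P(y),z],x) + B([P(z),x],y) = 0. Then [[x,y], P(z)] + [[y,z], P(x)] + [[z,x], P(y)] = 0 for all x, y, z ∈ 𝔥. -/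
/-!
Apply `P` to the Jacobi identity `[[x,y],z] + [[y,z],x] + [[z,x],y] = 0` and expand each term
with the anti-derivation rule. The terms in which `P` sits inside the inner bracket regroup into
the Jacobi identities for `(P x, y, z)`, `(P y, z, x)`, `(P z, x, y)`, each contributing one more
copy of the cyclic sum; what is left is twice that sum, which therefore vanishes in characteristic
zero.
-/

section LieRing

variable {L : Type*} [LieRing L]

theorem lie_lie_add_lie_lie_add_lie_lie (x y z : L) :
    ⁅⁅x, y⁆, z⁆ + ⁅⁅y, z⁆, x⁆ + ⁅⁅z, x⁆, y⁆ = 0 := by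
  rw [← lie_skew ⁅x, y⁆ z, ← lie_skew ⁅y, z⁆ x, ← lie_skew ⁅z, x⁆ y]
  linear_combination (norm := module) -lie_jacobi x y z

variable (P : L →+ L)

theorem map_lie_lie_of_antiderivation (hP : ∀ x y : L, P ⁅x, y⁆ = -⁅P x, y⁆ - ⁅x, P y⁆)
    (x y z : L) :
    P ⁅⁅x, y⁆, z⁆ = ⁅⁅P x, y⁆, z⁆ + ⁅⁅x, P y⁆, z⁆ - ⁅⁅x, y⁆, P z⁆ := by
  rw [hP, hP, sub_lie, neg_lie]
  abel

theorem two_nsmul_cyclic_lie_lie_map_eq_zero_of_antiderivation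
    (hP : ∀ x y : L, P ⁅x, y⁆ = -⁅P x, y⁆ - ⁅x, P y⁆) (x y z : L) :
    2 • (⁅⁅x, y⁆, P z⁆ + ⁅⁅y, z⁆, P x⁆ + ⁅⁅z, x⁆, P y⁆) = 0 := by
  have hPjacobi := congrArg P (lie_lie_add_lie_lie_add_lie_lie x y z)
  simp only [map_add, map_zero, map_lie_lie_of_antiderivation P hP] at hPjacobi
  linear_combination (norm := module) lie_lie_add_lie_lie_add_lie_lie (P x) y z
    + lie_lie_add_lie_lie_add_lie_lie (P y) z x + lie_lie_add_lie_lie_add_lie_lie (P z) x y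
    - hPjacobi

end LieRing

theorem cyclic_bracket_vanishes_general
    {L : Type*} [LieRing L] [LieAlgebra ℂ L]
    (P : L →ₗ[ℂ] L)
    (hantider : ∀ x y : L, P ⁅x, y⁆ = -⁅P x, y⁆ - ⁅x, P y⁆) :
    ∀ x y z : L, ⁅⁅x, y⁆, P z⁆ + ⁅⁅y, z⁆, P x⁆ + ⁅⁅z, x⁆, P y⁆ = 0 := by
  intro x y z
  have h := two_nsmul_cyclic_lie_lie_map_eq_zero_of_antiderivation P.toAddMonoidHom hantider x y z
  rwa [two_nsmul, ← two_smul ℂ, smul_eq_zero, or_iff_right two_ne_zero] at h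

/-- If `𝔥` is a finite-dimensional complex semisimple Lie algebra with
Killing form `B` and `P : 𝔥 → 𝔥` satisfies both `P([x,y]) = -[P x, y] - [x, P y]` and
the cyclic identity, then `[[x,y], P z] + [[y,z], P x] + [[z,x], P y] = 0`. -/
theorem cyclic_bracket_vanishes
    {L : Type*} [LieRing L] [LieAlgebra ℂ L] [FiniteDimensional ℂ L]
    [LieAlgebra.IsSemisimple ℂ L]
    (P : L →ₗ[ℂ] L)
    (hantider : ∀ x y : L, P ⁅x, y⁆ = -⁅P x, y⁆ - ⁅x, P y⁆)
    (hcyc : ∀ x y z : L,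
      killingForm ℂ L ⁅P x, y⁆ z + killingForm ℂ L ⁅P y, z⁆ x
        + killingForm ℂ L ⁅P z, x⁆ y = 0) :
    ∀ x y z : L, ⁅⁅x, y⁆, P z⁆ + ⁅⁅y, z⁆, P x⁆ + ⁅⁅z, x⁆, P y⁆ = 0 :=
  cyclic_bracket_vanishes_general P hantider
end

section
/- Let V = ℝⁿ, S : V → V symmetric with tr S = 0, and x ∈ V with Sx = 0. Then the map P : V → 𝔰𝔬(n), P(y) = Sy ∧ x, belongs to 𝒫(𝔰𝔬(n)) and satisfies Ric̃(P) = 0 (i.e. P ∈ 𝒫₀(𝔰𝔬(n))). -/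
/-! The cyclic identity uses only the symmetry of `S`. For the Ricci contraction, expanding the
wedge in an orthonormal basis gives `∑ᵢ (S eᵢ ∧ x) eᵢ = (tr S) x - S x` for every `S`, which the
two remaining hypotheses make vanish. -/

open scoped RealInnerProductSpace

/-- `(u ∧ v)(z) = ⟨u,z⟩v − ⟨v,z⟩u`. -/
noncomputable def wedge {V : Type*} [NormedAddCommGroup V] [InnerProductSpace ℝ V]
    (u v z : V) : V :=
  ⟪u, z⟫ • v - ⟪v, z⟫ • u

section

variable {V : Type*} [NormedAddCommGroup V] [InnerProductSpace ℝ V]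

lemma inner_wedge_left (u v z w : V) :
    ⟪wedge u v z, w⟫ = ⟪u, z⟫ * ⟪v, w⟫ - ⟪v, z⟫ * ⟪u, w⟫ := by
  simp only [wedge, inner_sub_left, real_inner_smul_left]

lemma LinearMap.IsSymmetric.inner_wedge_cyclic {S : V →ₗ[ℝ] V} (hS : S.IsSymmetric)
    (x u v w : V) :
    ⟪wedge (S u) x v, w⟫ + ⟪wedge (S v) x w, u⟫ + ⟪wedge (S w) x u, v⟫ = 0 := by
  have hswap (a c : V) : ⟪S a, c⟫ = ⟪S c, a⟫ := by rw [hS, real_inner_comm]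
  simp only [inner_wedge_left]
  rw [hswap u v, hswap v w, hswap w u]
  ring

lemma sum_wedge_map_orthonormalBasis {ι : Type*} [Fintype ι] (b : OrthonormalBasis ι ℝ V)
    (S : V →ₗ[ℝ] V) (x : V) :
    ∑ i, wedge (S (b i)) x (b i) = LinearMap.trace ℝ V S • x - S x := by
  have htrace : LinearMap.trace ℝ V S = ∑ i, ⟪S (b i), b i⟫ := by
    simp only [S.trace_eq_sum_inner b, real_inner_comm]
  have hS_x : S x = ∑ i, ⟪x, b i⟫ • S (b i) := by
    conv_lhs => rw [← b.sum_repr' x]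
    simp only [map_sum, map_smul, real_inner_comm]
  simp only [wedge, Finset.sum_sub_distrib, ← Finset.sum_smul, htrace, hS_x]

end

theorem wedgeS_mem_P0_general {n : ℕ} {V : Type*} [NormedAddCommGroup V]
    [InnerProductSpace ℝ V]
    (b : OrthonormalBasis (Fin n) ℝ V)
    (S : V →ₗ[ℝ] V) (hS : ∀ u v : V, ⟪S u, v⟫ = ⟪u, S v⟫)
    (htr : LinearMap.trace ℝ V S = 0)
    (x : V) (hx : S x = 0) :
    (∀ u v w : V,
        ⟪wedge (S u) x v, w⟫ + ⟪wedge (S v) x w, u⟫ + ⟪wedge (S w) x u, v⟫ = 0) ∧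
      ∑ i : Fin n, wedge (S (b i)) x (b i) = 0 :=
  ⟨LinearMap.IsSymmetric.inner_wedge_cyclic hS x, by
    rw [sum_wedge_map_orthonormalBasis, htr, hx, zero_smul, sub_zero]⟩

/-- For `S` symmetric traceless and `x` with `Sx = 0`, the map
`P(y) = Sy ∧ x` satisfies the cyclic identity and `Ric̃(P) = 0`, i.e.
`P ∈ 𝒫₀(𝔰𝔬(n))`. -/
theorem wedgeS_mem_P0 {n : ℕ} {V : Type*} [NormedAddCommGroup V]
    [InnerProductSpace ℝ V] [FiniteDimensional ℝ V]
    (b : OrthonormalBasis (Fin n) ℝ V)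
    (S : V →ₗ[ℝ] V) (hS : ∀ u v : V, ⟪S u, v⟫ = ⟪u, S v⟫)
    (htr : LinearMap.trace ℝ V S = 0)
    (x : V) (hx : S x = 0) :
    (∀ u v w : V,
        ⟪wedge (S u) x v, w⟫ + ⟪wedge (S v) x w, u⟫ + ⟪wedge (S w) x u, v⟫ = 0) ∧
      ∑ i : Fin n, wedge (S (b i)) x (b i) = 0 :=
  wedgeS_mem_P0_general b S hS htr x hx
end

section
/- Let V be a finite-dimensional complex vector space with a symplectic form ω, 𝔰𝔭(V) ⊆ 𝔰𝔩(V) the symplectic Lie algebra, and W = ℂ² ⊗ V with the symmetric bilinear form ω₂ ⊗ ω (ω₂ the standard symplectic form on ℂ²), so that 𝔰𝔭(V) acts on W inside 𝔰𝔬(W) via id ⊗ action. Then every element S of the first prolongation 𝔰𝔭(V)^{(1)} = {S : V → 𝔰𝔭(V) linear : S(u)v = S(v)u}, extended to P : W → 𝔰𝔭(V) ⊆ 𝔰𝔬(W) by P(a ⊗ v) = ω₂(e, a)·S(v) for a fixed e ∈ ℂ², satisfies the cyclic identity ⟨P(x)y, z⟩ + ⟨P(y)z, x⟩ + ⟨P(z)x,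 y⟩ = 0 for all x, y, z ∈ W, where ⟨·,·⟩ = ω₂ ⊗ ω. -/
/-!
On pure tensors `P(a ⊗ u)(b ⊗ v)` paired with `c ⊗ w` equals `ω₂(e, a) ω₂(b, c) ω(S u v, w)`.
The trilinear form `ω(S u v, w)` of an element of the prolongation is totally symmetric, so the
cyclic sum factors as `ω(S u v, w)` times `ω₂(e,a) ω₂(b,c) + ω₂(e,b) ω₂(c,a) + ω₂(e,c) ω₂(a,b)`,
which vanishes since there are no nonzero alternating trilinear forms on a plane.
-/

open scoped TensorProduct

namespace LinearMap

variable {R M Q : Type*} [CommSemiring R] [AddCommMonoid M] [Module R M]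
  [AddCommMonoid Q] [Module R Q]

def rotate (T : M →ₗ[R] M →ₗ[R] M →ₗ[R] Q) : M →ₗ[R] M →ₗ[R] M →ₗ[R] Q :=
  ((lflip (R₀ := R)).toLinearMap ∘ₗ T).flip

@[simp]
theorem rotate_apply (T : M →ₗ[R] M →ₗ[R] M →ₗ[R] Q) (x y z : M) :
    T.rotate x y z = T y z x :=
  rfl

def cyclicSum (T : M →ₗ[R] M →ₗ[R] M →ₗ[R] Q) : M →ₗ[R] M →ₗ[R] M →ₗ[R] Q :=
  T + T.rotate + T.rotate.rotate

@[simp]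
theorem cyclicSum_apply (T : M →ₗ[R] M →ₗ[R] M →ₗ[R] Q) (x y z : M) :
    T.cyclicSum x y z = T x y z + T y z x + T z x y := by
  simp [cyclicSum]

end LinearMap

theorem TensorProduct.ext₃' {R M N Q : Type*} [CommSemiring R] [AddCommMonoid M] [Module R M]
    [AddCommMonoid N] [Module R N] [AddCommMonoid Q] [Module R Q]
    {T T' : M ⊗[R] N →ₗ[R] M ⊗[R] N →ₗ[R] M ⊗[R] N →ₗ[R] Q}
    (h : ∀ (a b c : M) (u v w : N),
      T (a ⊗ₜ u) (b ⊗ₜ v) (c ⊗ₜ w) = T' (a ⊗ₜ u) (b ⊗ₜ v) (c ⊗ₜ w)) :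
    T = T' :=
  TensorProduct.ext' fun a u => TensorProduct.ext' fun b v => TensorProduct.ext' fun c w =>
    h a b c u v w

section Prolongation

variable {R M : Type*} [CommRing R] [AddCommGroup M] [Module R M]
  {ω : M →ₗ[R] M →ₗ[R] R} {S : M →ₗ[R] Module.End R M}

theorem prolongation_form_rotate (halt : ω.IsAlt)
    (hsp : ∀ u v w : M, ω (S u v) w + ω v (S u w) = 0) (hsym : ∀ u v : M, S u v = S v u)
    (u v w : M) : ω (S v w) u = ω (S u v) w := by
  have h := hsp v w u
  rw [hsym v u, ← halt.neg (S u v) w] at h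
  linear_combination h

theorem plane_alternating_trilinear_eq_zero (e a b c : Fin 2 → R) :
    (e 0 * a 1 - e 1 * a 0) * (b 0 * c 1 - b 1 * c 0)
      + (e 0 * b 1 - e 1 * b 0) * (c 0 * a 1 - c 1 * a 0)
      + (e 0 * c 1 - e 1 * c 0) * (a 0 * b 1 - a 1 * b 0) = 0 := by
  ring

variable (halt : ω.IsAlt) (hsp : ∀ u v w : M, ω (S u v) w + ω v (S u w) = 0)
  (hsym : ∀ u v : M, S u v = S v u) (e : Fin 2 → R)
  {B : ((Fin 2 → R) ⊗[R] M) →ₗ[R] ((Fin 2 → R) ⊗[R] M) →ₗ[R] R}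
  (hB : ∀ (a b : Fin 2 → R) (u v : M),
    B (a ⊗ₜ[R] u) (b ⊗ₜ[R] v) = (a 0 * b 1 - a 1 * b 0) * ω u v)
  {P : ((Fin 2 → R) ⊗[R] M) →ₗ[R] Module.End R ((Fin 2 → R) ⊗[R] M)}
  (hP : ∀ (a : Fin 2 → R) (v : M),
    P (a ⊗ₜ[R] v) = (e 0 * a 1 - e 1 * a 0) • LinearMap.lTensor (Fin 2 → R) (S v))
include halt hsp hsym hB hP

theorem cyclicSum_prolongation_tmul (a b c : Fin 2 → R) (u v w : M) :
    (P.compr₂ B).cyclicSum (a ⊗ₜ u) (b ⊗ₜ v) (c ⊗ₜ w) = 0 := by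
  have hvw := prolongation_form_rotate halt hsp hsym u v w
  have hwu := (prolongation_form_rotate halt hsp hsym w u v).symm
  simp only [LinearMap.cyclicSum_apply, LinearMap.compr₂_apply, hP, LinearMap.smul_apply,
    LinearMap.lTensor_tmul, map_smul, smul_eq_mul, hB, hvw, hwu]
  linear_combination ω (S u v) w * plane_alternating_trilinear_eq_zero e a b c

theorem cyclicSum_prolongation_eq_zero : (P.compr₂ B).cyclicSum = 0 :=
  TensorProduct.ext₃' fun a b c u v w => by
    simpa using cyclicSum_prolongation_tmul halt hsp hsym e hB hP a b c u v w

end Prolongation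

theorem prolongation_gives_P_general
    {V : Type*} [AddCommGroup V] [Module ℂ V]
    (ω : V →ₗ[ℂ] V →ₗ[ℂ] ℂ) (halt : ∀ v : V, ω v v = 0)
    (S : V →ₗ[ℂ] Module.End ℂ V)
    (hsp : ∀ u v w : V, ω (S u v) w + ω v (S u w) = 0)
    (hsym : ∀ u v : V, S u v = S v u)
    (e : Fin 2 → ℂ)
    (B : ((Fin 2 → ℂ) ⊗[ℂ] V) →ₗ[ℂ] ((Fin 2 → ℂ) ⊗[ℂ] V) →ₗ[ℂ] ℂ)
    (hB : ∀ (a b : Fin 2 → ℂ) (u v : V),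
      B (a ⊗ₜ[ℂ] u) (b ⊗ₜ[ℂ] v) = (a 0 * b 1 - a 1 * b 0) * ω u v)
    (P : ((Fin 2 → ℂ) ⊗[ℂ] V) →ₗ[ℂ] Module.End ℂ ((Fin 2 → ℂ) ⊗[ℂ] V))
    (hP : ∀ (a : Fin 2 → ℂ) (v : V),
      P (a ⊗ₜ[ℂ] v) = (e 0 * a 1 - e 1 * a 0) • LinearMap.lTensor (Fin 2 → ℂ) (S v)) :
    ∀ x y z : (Fin 2 → ℂ) ⊗[ℂ] V, B (P x y) z + B (P y z) x + B (P z x) y = 0 := by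
  intro x y z
  simpa using congr($(cyclicSum_prolongation_eq_zero halt hsp hsym e hB hP) x y z)

/-- Let `(V, ω)` be a complex symplectic space, `S ∈ 𝔰𝔭(V)^{(1)}` an
element of the first prolongation (`S(u)v = S(v)u`, each `S(u) ∈ 𝔰𝔭(V)`), and
`W = ℂ² ⊗ V` with the symmetric bilinear form `B = ω₂ ⊗ ω`. Then the map
`P : W → 𝔰𝔭(V) ⊆ 𝔰𝔬(W)`, `P(a ⊗ v) = ω₂(e,a) · (id ⊗ S(v))`, satisfies the cyclic
identity `B(P(x)y, z) + B(P(y)z, x) + B(P(z)x, y) = 0` for all `x, y, z ∈ W`. -/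
theorem prolongation_gives_P
    {V : Type*} [AddCommGroup V] [Module ℂ V] [FiniteDimensional ℂ V]
    (ω : V →ₗ[ℂ] V →ₗ[ℂ] ℂ) (halt : ∀ v : V, ω v v = 0)
    (S : V →ₗ[ℂ] Module.End ℂ V)
    (hsp : ∀ u v w : V, ω (S u v) w + ω v (S u w) = 0)
    (hsym : ∀ u v : V, S u v = S v u)
    (e : Fin 2 → ℂ)
    (B : ((Fin 2 → ℂ) ⊗[ℂ] V) →ₗ[ℂ] ((Fin 2 → ℂ) ⊗[ℂ] V) →ₗ[ℂ] ℂ)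
    (hB : ∀ (a b : Fin 2 → ℂ) (u v : V),
      B (a ⊗ₜ[ℂ] u) (b ⊗ₜ[ℂ] v) = (a 0 * b 1 - a 1 * b 0) * ω u v)
    (P : ((Fin 2 → ℂ) ⊗[ℂ] V) →ₗ[ℂ] Module.End ℂ ((Fin 2 → ℂ) ⊗[ℂ] V))
    (hP : ∀ (a : Fin 2 → ℂ) (v : V),
      P (a ⊗ₜ[ℂ] v) = (e 0 * a 1 - e 1 * a 0) • LinearMap.lTensor (Fin 2 → ℂ) (S v)) :
    ∀ x y z : (Fin 2 → ℂ) ⊗[ℂ] V, B (P x y) z + B (P y z) x + B (P z x) y = 0 :=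
  prolongation_gives_P_general ω halt S hsp hsym e B hB P hP
end

section
/- Let V = ℂ^{2n} (n ≥ 2) with standard symplectic basis e₁,…,eₙ,e₋₁,…,e₋ₙ and 𝔥 = 𝔰𝔭(2n,ℂ) acting on Λ²ℂ^{2n}. Let φ = Σ_{i=2}^{n} e₁∧eᵢ ⊗ (E_{1,i} − E_{n+i,n+1}) ∈ (Λ²V) ⊗ 𝔥. Then with x = e₋₁∧e₋₂, y = e₂∧e₃, z = e₋₁∧e₋₃, the cyclic sum ⟨φ(x)y, z⟩ + ⟨φ(y)z, x⟩ + ⟨φ(z)x, y⟩ equals 2 (in particular is nonzero), where ⟨·,·⟩ is the symmetric form induced on Λ²ℂ^{2n} and φ(ξ) for ξ ∈ Λ²V denotes contraction of φ against ξ producing an element of 𝔥 acting on Λ²V. -/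
/-- `V = ℂ^{2n}` with basis `e₁,…,eₙ,e₋₁,…,e₋ₙ`: `Sum.inl i ↔ e_{i+1}`,
`Sum.inr i ↔ e_{-(i+1)}`. -/
abbrev Vc (n : ℕ) := (Fin n ⊕ Fin n) → ℂ

/-- standard basis vectors -/
noncomputable def ee {n : ℕ} (i : Fin n ⊕ Fin n) : Vc n := Pi.single i 1

/-- the standard symplectic form with `ω(eᵢ, e₋ᵢ) = 1` -/
noncomputable def ωc (n : ℕ) (u v : Vc n) : ℂ :=
  ∑ i : Fin n, (u (Sum.inl i) * v (Sum.inr i) - u (Sum.inr i) * v (Sum.inl i))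

/-- the induced symmetric bilinear form on `Λ²ℂ^{2n}`:
`⟨u∧v, w∧z⟩ = ω(u,w)ω(v,z) − ω(u,z)ω(v,w)` -/
noncomputable def Fc (n : ℕ) (u v w z : Vc n) : ℂ :=
  ωc n u w * ωc n v z - ωc n u z * ωc n v w

/-- the elementary matrix `E_{a,b}` as an endomorphism of `ℂ^{2n}` -/
noncomputable def Ec {n : ℕ} (a b : Fin n ⊕ Fin n) : Vc n → Vc n :=
  fun u => u b • ee a

/-- The element `φ = Σ_{i=2}^{n} e₁∧eᵢ ⊗ (E_{1,i} − E_{n+i,n+1})` of `Λ²V ⊗ 𝔥`,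
viewed (via contraction with the induced form on `Λ²V`) as the map sending
`u∧v ∈ Λ²V` to the endomorphism `Σ_{i≠1} ⟨e₁∧eᵢ, u∧v⟩ (E_{1,i} − E_{n+i,n+1})`. -/
noncomputable def φc (n : ℕ) [NeZero n] (u v : Vc n) : Vc n → Vc n :=
  fun w =>
    ∑ i ∈ Finset.univ.filter (fun i : Fin n => i ≠ 0),
      Fc n (ee (Sum.inl 0)) (ee (Sum.inl i)) u v •
        (Ec (Sum.inl 0) (Sum.inl i) w - Ec (Sum.inr i) (Sum.inr 0) w)

/-- `⟨A·(u∧v), w∧z⟩` where `A` acts on `Λ²V` by the derivation action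
`A·(u∧v) = Au∧v + u∧Av`. -/
noncomputable def Gc (n : ℕ) (A : Vc n → Vc n) (u v w z : Vc n) : ℂ :=
  Fc n (A u) v w z + Fc n u (A v) w z

/-!
The positive vectors `e₁, …, eₙ` span a Lagrangian subspace, so `φ(e₂∧e₃) = 0`, while for
`k ≠ 1` only the `i = k` summand of `φ(e₋₁∧e₋ₖ)` survives: `φ(e₋₁∧e₋ₖ) = E_{1,k} − E_{-k,-1}`.
Hence `φ(x)y = e₁∧e₃` and `φ(z)x = −e₋₃∧e₋₂`, and the cyclic sum is
`⟨e₁∧e₃, e₋₁∧e₋₃⟩ + 0 + ⟨−e₋₃∧e₋₂, e₂∧e₃⟩ = 1 + 0 + 1`.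
-/

section

variable {n : ℕ}

lemma ee_apply (a b : Fin n ⊕ Fin n) : ee a b = if b = a then 1 else 0 :=
  Pi.single_apply a 1 b

@[simp]
lemma ωc_ee_inl (i : Fin n) (v : Vc n) : ωc n (ee (Sum.inl i)) v = v (Sum.inr i) := by
  simp [ωc, ee_apply]

@[simp]
lemma ωc_ee_inr (i : Fin n) (v : Vc n) : ωc n (ee (Sum.inr i)) v = -v (Sum.inl i) := by
  simp [ωc, ee_apply]

@[simp]
lemma ωc_zero_left (v : Vc n) : ωc n 0 v = 0 := by
  simp [ωc]

@[simp]
lemma ωc_neg_left (u v : Vc n) : ωc n (-u) v = -ωc n u v := by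
  simp only [ωc, ← Finset.sum_neg_distrib, Pi.neg_apply]
  exact Finset.sum_congr rfl fun _ _ => by ring

lemma Ec_ee (a b c : Fin n ⊕ Fin n) : Ec a b (ee c) = if b = c then ee a else 0 := by
  simp [Ec, ee_apply]

variable [NeZero n]

lemma φc_ee_inl_ee_inl (j k : Fin n) : φc n (ee (Sum.inl j)) (ee (Sum.inl k)) = 0 := by
  funext w
  refine Finset.sum_eq_zero fun i _ => ?_
  simp [Fc, ee_apply]

lemma φc_ee_inr_zero_ee_inr {k : Fin n} (hk : k ≠ 0) :
    φc n (ee (Sum.inr 0)) (ee (Sum.inr k)) =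
      fun w => Ec (Sum.inl 0) (Sum.inl k) w - Ec (Sum.inr k) (Sum.inr 0) w := by
  funext w
  rw [φc, Finset.sum_eq_single_of_mem k (by simpa using hk)]
  · simp [Fc, ee_apply, hk]
  · intro i _ hik
    simp [Fc, ee_apply, hik, hk.symm]

end

/-- For `𝔥 = 𝔰𝔭(2n,ℂ)` acting on `Λ²ℂ^{2n}` (`n ≥ 3`, here `n = m+3`),
the highest weight vector `φ = Σ_{i=2}^n e₁∧eᵢ ⊗ (E_{1,i} − E_{n+i,n+1})` has
nonvanishing cyclic sum: with `x = e₋₁∧e₋₂`, `y = e₂∧e₃`, `z = e₋₁∧e₋₃`,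
`⟨φ(x)y, z⟩ + ⟨φ(y)z, x⟩ + ⟨φ(z)x, y⟩ = 2`. -/
theorem highest_vector_not_in_P (m : ℕ) :
    Gc (m + 3) (φc (m + 3) (ee (Sum.inr 0)) (ee (Sum.inr 1)))
        (ee (Sum.inl 1)) (ee (Sum.inl 2)) (ee (Sum.inr 0)) (ee (Sum.inr 2))
      + Gc (m + 3) (φc (m + 3) (ee (Sum.inl 1)) (ee (Sum.inl 2)))
        (ee (Sum.inr 0)) (ee (Sum.inr 2)) (ee (Sum.inr 0)) (ee (Sum.inr 1))
      + Gc (m + 3) (φc (m + 3) (ee (Sum.inr 0)) (ee (Sum.inr 2)))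
        (ee (Sum.inr 0)) (ee (Sum.inr 1)) (ee (Sum.inl 1)) (ee (Sum.inl 2)) = 2 := by
  have h2 : 2 % (m + 3) = 2 := Nat.mod_eq_of_lt (by omega)
  have h10 : (1 : Fin (m + 3)) ≠ 0 := by simp
  have h20 : (2 : Fin (m + 3)) ≠ 0 := by simp [Fin.ext_iff, h2]
  have h12 : (1 : Fin (m + 3)) ≠ 2 := by simp [Fin.ext_iff, h2]
  rw [φc_ee_inl_ee_inl, φc_ee_inr_zero_ee_inr h10, φc_ee_inr_zero_ee_inr h20]
  simp [Gc, Fc, Ec_ee, ee_apply, h10, h20, h12, h10.symm, h20.symm, h12.symm,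
    one_add_one_eq_two]
end
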